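/- Let T > 0, r ∈ ℝ, let γ : ℝ → ℝ be any function, let 0 ≤ t < T and s, u ∈ ℝ be fixed, and regard the modified Black–Scholes price of the floating-strike geometric Asian call C₀ = γ(t) e^s [N(d₁(σ̄)) − e^{u/T − Q(σ̄)} N(d₂(σ̄))] as a function of the volatility parameter σ̄ > 0 (with d₁, d₂, Q depending on σ̄ as below). Then its derivative with respect to σ̄ (the Asian vega) equals ∂C₀/∂σ̄ = γ(t) e^{s + u/T − Q} [ (1/T)√((T³ − t³)/3) Φ(d₂) + σ̄ (T − t)² (T + 2t) N(d₂) / (6T²) ]. -/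

import Mathlib

/-- Partial derivative in the first (time) variable. -/
noncomputable def pdT (F : ℝ → ℝ → ℝ → ℝ) (t s u : ℝ) : ℝ := deriv (fun x => F x s u) t

/-- Partial derivative in the second (log-price) variable. -/
noncomputable def pdS (F : ℝ → ℝ → ℝ → ℝ) (t s u : ℝ) : ℝ := deriv (fun x => F t x u) s

/-- Partial derivative in the third (average) variable. -/
noncomputable def pdU (F : ℝ → ℝ → ℝ → ℝ) (t s u : ℝ) : ℝ := deriv (fun x => F t s x) u

/-- Standard normal cumulative distribution function. -/
noncomputable def stdN (x : ℝ) : ℝ :=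
  ∫ y in Set.Iic x, Real.exp (-(y ^ 2) / 2) / Real.sqrt (2 * Real.pi)

/-- Standard normal probability density function. -/
noncomputable def stdPhi (x : ℝ) : ℝ := Real.exp (-(x ^ 2) / 2) / Real.sqrt (2 * Real.pi)

/-- `d₁` for the floating-strike geometric Asian call. -/
noncomputable def dOne (T r σ t u : ℝ) : ℝ :=
  (-u + (r + σ ^ 2 / 2) * (T ^ 2 - t ^ 2) / 2) / (σ * Real.sqrt ((T ^ 3 - t ^ 3) / 3))

/-- `d₂` for the floating-strike geometric Asian call. -/
noncomputable def dTwo (T r σ t u : ℝ) : ℝ :=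
  dOne T r σ t u - (σ / T) * Real.sqrt ((T ^ 3 - t ^ 3) / 3)

/-- The quantity `Q` appearing in the geometric Asian option formulas. -/
noncomputable def Qfl (T r σ t : ℝ) : ℝ :=
  (r + σ ^ 2 / 2) * (T ^ 2 - t ^ 2) / (2 * T) - σ ^ 2 * (T ^ 3 - t ^ 3) / (6 * T ^ 2)

/-!
As for the Black–Scholes vega: with `d₂ = d₁ - σA/T`, `A = √((T³ - t³)/3)`, the Gaussian identity
`Φ(d₁) = e^{u/T - Q} Φ(d₂)` makes the two terms carrying `∂d₁/∂σ` cancel, so the derivative is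
`e^{u/T - Q} (∂(σA/T)/∂σ · Φ(d₂) + ∂Q/∂σ · N(d₂))`, with `∂Q/∂σ = σ(T - t)²(T + 2t)/(6T²)`.
-/

open Real

lemma continuous_stdPhi : Continuous stdPhi := by
  unfold stdPhi
  fun_prop

lemma integrable_stdPhi : MeasureTheory.Integrable stdPhi := by
  refine ((integrable_exp_neg_mul_sq (by norm_num : (0 : ℝ) < 1 / 2)).div_const
    (√(2 * π))).congr (Filter.Eventually.of_forall fun y => ?_)
  simp only [stdPhi]
  ring_nf

lemma hasDerivAt_stdN (x : ℝ) : HasDerivAt stdN (stdPhi x) x := by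
  have hN : stdN = fun z => stdN 0 + ∫ y in (0 : ℝ)..z, stdPhi y := by
    ext z
    rw [← intervalIntegral.integral_Iic_sub_Iic integrable_stdPhi.integrableOn
      integrable_stdPhi.integrableOn]
    simp only [stdN, stdPhi]
    ring
  rw [hN]
  exact (intervalIntegral.integral_hasDerivAt_right integrable_stdPhi.intervalIntegrable
    (continuous_stdPhi.stronglyMeasurableAtFilter _ _) continuous_stdPhi.continuousAt).const_add _

lemma stdPhi_eq_exp_mul_stdPhi (a b : ℝ) :
    stdPhi a = exp ((b ^ 2 - a ^ 2) / 2) * stdPhi b := by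
  simp only [stdPhi, ← mul_div_assoc, ← exp_add]
  ring_nf

lemma stdPhi_dOne {T r σ t : ℝ} (u : ℝ) (hσ : σ ≠ 0) (htT : t ^ 3 < T ^ 3) :
    stdPhi (dOne T r σ t u) = exp (u / T - Qfl T r σ t) * stdPhi (dTwo T r σ t u) := by
  have hA2 : √((T ^ 3 - t ^ 3) / 3) ^ 2 = (T ^ 3 - t ^ 3) / 3 := sq_sqrt (by linarith)
  have hA : √((T ^ 3 - t ^ 3) / 3) ≠ 0 := (sqrt_pos.mpr (by linarith)).ne'
  have hd₁ : dOne T r σ t u * (σ * √((T ^ 3 - t ^ 3) / 3)) =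
      -u + (r + σ ^ 2 / 2) * (T ^ 2 - t ^ 2) / 2 := by
    rw [dOne]
    field_simp
  rw [stdPhi_eq_exp_mul_stdPhi _ (dTwo T r σ t u), dTwo, Qfl]
  congr 2
  linear_combination (-1 / T) * hd₁ + σ ^ 2 / (2 * T ^ 2) * hA2

lemma hasDerivAt_Qfl (T r t σ : ℝ) :
    HasDerivAt (fun x => Qfl T r x t) (σ * (T - t) ^ 2 * (T + 2 * t) / (6 * T ^ 2)) σ := by
  have hsq : HasDerivAt (fun x : ℝ => x ^ 2) (2 * σ) σ := by simpa using hasDerivAt_pow 2 σ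
  refine ((((hsq.div_const 2).const_add r).mul_const _).div_const _ |>.sub
    ((hsq.mul_const _).div_const _)).congr_deriv ?_
  field_simp
  ring

lemma differentiableAt_dOne {T t : ℝ} (r u : ℝ) {σ : ℝ} (hσ : σ ≠ 0) (htT : t ^ 3 < T ^ 3) :
    DifferentiableAt ℝ (fun x => dOne T r x t u) σ := by
  have hA : √((T ^ 3 - t ^ 3) / 3) ≠ 0 := (sqrt_pos.mpr (by linarith)).ne'
  unfold dOne
  fun_prop (disch := exact mul_ne_zero hσ hA)

lemma hasDerivAt_stdN_sub_exp_mul_stdN {d₁ v Q : ℝ → ℝ} {d₁' v' Q' c σ : ℝ}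
    (hd₁ : HasDerivAt d₁ d₁' σ) (hv : HasDerivAt v v' σ) (hQ : HasDerivAt Q Q' σ)
    (hφ : stdPhi (d₁ σ) = exp (c - Q σ) * stdPhi (d₁ σ - v σ)) :
    HasDerivAt (fun x => stdN (d₁ x) - exp (c - Q x) * stdN (d₁ x - v x))
      (exp (c - Q σ) * (v' * stdPhi (d₁ σ - v σ) + Q' * stdN (d₁ σ - v σ))) σ := by
  refine ((hasDerivAt_stdN _).comp σ hd₁ |>.sub
    (((hQ.const_sub c).exp).mul ((hasDerivAt_stdN _).comp σ (hd₁.sub hv)))).congr_deriv ?_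
  simp only [Function.comp_apply, Pi.sub_apply, hφ]
  ring

theorem stmt11_general (T r : ℝ) (γ : ℝ → ℝ) (t s u : ℝ)
    (ht0 : 0 ≤ t) (htT : t < T) (σ : ℝ) (hσ : 0 < σ) :
    deriv (fun x : ℝ => γ t * Real.exp s * (stdN (dOne T r x t u) -
        Real.exp (u / T - Qfl T r x t) * stdN (dTwo T r x t u))) σ =
      γ t * Real.exp (s + u / T - Qfl T r σ t) *
        ((1 / T) * Real.sqrt ((T ^ 3 - t ^ 3) / 3) * stdPhi (dTwo T r σ t u) +
          σ * (T - t) ^ 2 * (T + 2 * t) * stdN (dTwo T r σ t u) / (6 * T ^ 2)) := by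
  have ht3 : t ^ 3 < T ^ 3 := pow_lt_pow_left₀ htT ht0 (by norm_num)
  have hv : HasDerivAt (fun x => x / T * √((T ^ 3 - t ^ 3) / 3))
      (1 / T * √((T ^ 3 - t ^ 3) / 3)) σ :=
    ((hasDerivAt_id σ).div_const T).mul_const _
  have hC : HasDerivAt (fun x => γ t * exp s * (stdN (dOne T r x t u) -
      exp (u / T - Qfl T r x t) * stdN (dTwo T r x t u))) _ σ :=
    (hasDerivAt_stdN_sub_exp_mul_stdN (differentiableAt_dOne r u hσ.ne' ht3).hasDerivAt hv
      (hasDerivAt_Qfl T r t σ) (stdPhi_dOne u hσ.ne' ht3)).const_mul (γ t * exp s)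
  rw [hC.deriv, dTwo, add_sub_assoc, exp_add]
  ring

theorem stmt11 (T r : ℝ) (hT : 0 < T) (γ : ℝ → ℝ) (t s u : ℝ)
    (ht0 : 0 ≤ t) (htT : t < T) (σ : ℝ) (hσ : 0 < σ) :
    deriv (fun x : ℝ => γ t * Real.exp s * (stdN (dOne T r x t u) -
        Real.exp (u / T - Qfl T r x t) * stdN (dTwo T r x t u))) σ =
      γ t * Real.exp (s + u / T - Qfl T r σ t) *
        ((1 / T) * Real.sqrt ((T ^ 3 - t ^ 3) / 3) * stdPhi (dTwo T r σ t u) +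
          σ * (T - t) ^ 2 * (T + 2 * t) * stdN (dTwo T r σ t u) / (6 * T ^ 2)) :=
  stmt11_general T r γ t s u ht0 htT σ hσ
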